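/- arXiv:1211.3225 — 4 statements merged into one kernel-verified Lean document; each statement's English description precedes it below -/
import Mathlib

section
/- Let H be a nonnegative self-adjoint operator on a Hilbert space and f a bounded positive continuous function on [0,∞). If λ ≥ 0 does not belong to σ(H) (and λ > 0, or λ = 0), and {ψₙ} is a sequence in the domain of H with ‖ψₙ‖ = 1, then it cannot hold simultaneously that ⟨f(H)(H−λ)ψₙ, (H−λ)ψₙ⟩ → 0 and ⟨ψₙ, (H−λ)ψₙ⟩ → 0. Hence the existence of such a sequence implies λ ∈ σ(H). -/
/-!
Already the first limit is impossible. Since `H ≥ 0`, its spectrum is a compact subset of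
`[0, ∞)`, on which `f` attains a positive minimum `r`; hence `f(H) ≥ r` in the Loewner order.
Since `λ ∉ σ(H)`, `T = H - λ` is invertible, so `‖Tψ‖ ≥ ‖T⁻¹‖⁻¹ ‖ψ‖`. Together,
`Re ⟨f(H) Tψₙ, Tψₙ⟩ ≥ r ‖T⁻¹‖⁻² > 0` for every unit vector `ψₙ`.
-/

open Filter Topology

lemma exists_pos_algebraMap_le_cfc {A : Type*} [CStarAlgebra A] [PartialOrder A]
    [StarOrderedRing A] [Nontrivial A] {a : A} (ha : 0 ≤ a) {f : ℝ → ℝ}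
    (hf : ContinuousOn f (spectrum ℝ a)) (hf_pos : ∀ x, 0 ≤ x → 0 < f x) :
    ∃ r > 0, algebraMap ℝ A r ≤ cfc f a := by
  refine (CFC.exists_pos_algebraMap_le_iff (cfc_predicate f a)).2 ?_
  rw [cfc_map_spectrum f a]
  rintro _ ⟨x, hx, rfl⟩
  exact hf_pos x (spectrum_nonneg_of_nonneg ha hx)

namespace ContinuousLinearMap

lemma norm_le_norm_inv_mul_norm_apply {𝕜 E : Type*} [NontriviallyNormedField 𝕜]
    [NormedAddCommGroup E] [NormedSpace 𝕜 E] (u : (E →L[𝕜] E)ˣ) (x : E) :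
    ‖x‖ ≤ ‖(↑u⁻¹ : E →L[𝕜] E)‖ * ‖(u : E →L[𝕜] E) x‖ := by
  have hx : (↑u⁻¹ : E →L[𝕜] E) ((u : E →L[𝕜] E) x) = x := by
    rw [← mul_apply_eq_comp, u.inv_mul, one_apply_eq_self]
  simpa only [hx] using (↑u⁻¹ : E →L[𝕜] E).le_opNorm ((u : E →L[𝕜] E) x)

variable {E : Type*} [NormedAddCommGroup E] [InnerProductSpace ℂ E]

lemma mul_norm_sq_le_re_inner_of_algebraMap_le {A : E →L[ℂ] E} {r : ℝ}
    (h : algebraMap ℝ (E →L[ℂ] E) r ≤ A) (x : E) :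
    r * ‖x‖ ^ 2 ≤ (inner ℂ (A x) x).re := by
  have := ((le_def _ _).1 h).re_inner_nonneg_left x
  rw [sub_apply, inner_sub_left, map_sub, sub_nonneg, Algebra.algebraMap_eq_smul_one,
    smul_apply, one_apply_eq_self, RCLike.real_smul_eq_coe_smul (K := ℂ), inner_smul_left,
    inner_self_eq_norm_sq_to_K] at this
  simpa [← Complex.ofReal_pow] using this

lemma exists_pos_mul_norm_sq_le_re_inner_conj [Nontrivial E] {A T : E →L[ℂ] E} {r : ℝ}
    (hr : 0 < r) (hA : algebraMap ℝ (E →L[ℂ] E) r ≤ A) (hT : IsUnit T) :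
    ∃ c > 0, ∀ x, c * ‖x‖ ^ 2 ≤ (inner ℂ (A (T x)) (T x)).re := by
  obtain ⟨u, rfl⟩ := hT
  set K := ‖(↑u⁻¹ : E →L[ℂ] E)‖
  have hK : 0 < K := norm_pos_iff.2 u⁻¹.ne_zero
  refine ⟨r / K ^ 2, by positivity, fun x ↦ ?_⟩
  calc r / K ^ 2 * ‖x‖ ^ 2
      ≤ r / K ^ 2 * (K * ‖(u : E →L[ℂ] E) x‖) ^ 2 := by
        gcongr; exact norm_le_norm_inv_mul_norm_apply u x
    _ = r * ‖(u : E →L[ℂ] E) x‖ ^ 2 := by field_simp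
    _ ≤ _ := mul_norm_sq_le_re_inner_of_algebraMap_le hA _

end ContinuousLinearMap

theorem generalized_weyl_sufficiency_general
    {ℋ : Type*} [NormedAddCommGroup ℋ] [InnerProductSpace ℂ ℋ] [CompleteSpace ℋ]
    (H : ℋ →L[ℂ] ℋ) (hHpos : H.IsPositive)
    (f : ℝ → ℝ) (hf_cont : Continuous f)
    (hf_pos : ∀ x : ℝ, 0 ≤ x → 0 < f x)
    (lam : ℝ) (hlam : (lam : ℂ) ∉ spectrum ℂ H)
    (ψ : ℕ → ℋ) (hψ : ∀ n, ‖ψ n‖ = 1) :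
    ¬ (Tendsto (fun n =>
          (inner ℂ ((cfc f H) ((H - (lam : ℂ) • 1) (ψ n)))
            ((H - (lam : ℂ) • 1) (ψ n)) : ℂ)) atTop (nhds 0) ∧
       Tendsto (fun n => (inner ℂ (ψ n) ((H - (lam : ℂ) • 1) (ψ n)) : ℂ))
         atTop (nhds 0)) := by
  rintro ⟨h_tendsto, -⟩
  have : Nontrivial ℋ := nontrivial_of_ne (ψ 0) 0 (norm_ne_zero_iff.1 (by simp [hψ 0]))
  obtain ⟨r, hr, hr_le⟩ := exists_pos_algebraMap_le_cfc
    ((ContinuousLinearMap.nonneg_iff_isPositive H).2 hHpos) hf_cont.continuousOn hf_pos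
  have hT : IsUnit (H - (lam : ℂ) • 1) := by
    simpa [Algebra.algebraMap_eq_smul_one] using (spectrum.notMem_iff.1 hlam).neg
  obtain ⟨c, hc, hc_le⟩ :=
    ContinuousLinearMap.exists_pos_mul_norm_sq_le_re_inner_conj hr hr_le hT
  have h_re := (Complex.continuous_re.tendsto 0).comp h_tendsto
  have : c ≤ 0 := ge_of_tendsto' h_re fun n ↦ by simpa [hψ n] using hc_le (ψ n)
  linarith

/-- Generalized Weyl criterion (sufficiency, contrapositive form): if a
nonnegative real number `λ` does not belong to `σ(H)` for a nonnegative
self-adjoint operator `H`, and `f` is a bounded positive continuous function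
on `[0,∞)`, then no sequence of unit vectors `ψₙ` can satisfy both
`⟨f(H)(H−λ)ψₙ, (H−λ)ψₙ⟩ → 0` and `⟨ψₙ, (H−λ)ψₙ⟩ → 0`. -/
theorem generalized_weyl_sufficiency
    {ℋ : Type*} [NormedAddCommGroup ℋ] [InnerProductSpace ℂ ℋ] [CompleteSpace ℋ]
    (H : ℋ →L[ℂ] ℋ) (hH : IsSelfAdjoint H) (hHpos : H.IsPositive)
    (f : ℝ → ℝ) (hf_cont : Continuous f)
    (hf_pos : ∀ x : ℝ, 0 ≤ x → 0 < f x)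
    (hf_bdd : ∃ C : ℝ, ∀ x : ℝ, 0 ≤ x → f x ≤ C)
    (lam : ℝ) (hlam_nonneg : 0 ≤ lam) (hlam : (lam : ℂ) ∉ spectrum ℂ H)
    (ψ : ℕ → ℋ) (hψ : ∀ n, ‖ψ n‖ = 1) :
    ¬ (Tendsto (fun n =>
          (inner ℂ ((cfc f H) ((H - (lam : ℂ) • 1) (ψ n)))
            ((H - (lam : ℂ) • 1) (ψ n)) : ℂ)) atTop (nhds 0) ∧
       Tendsto (fun n => (inner ℂ (ψ n) ((H - (lam : ℂ) • 1) (ψ n)) : ℂ))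
         atTop (nhds 0)) :=
  generalized_weyl_sufficiency_general H hHpos f hf_cont hf_pos lam hlam ψ hψ
end

section
/- Let H be a nonnegative self-adjoint operator on a Hilbert space and λ ≥ 0. If there exists a sequence ψₙ in the domain of H with ‖ψₙ‖ = 1 such that ⟨(H+1)^{-1}ψₙ, (H−λ)ψₙ⟩ → 0 and ⟨ψₙ, (H−λ)ψₙ⟩ → 0, then λ ∈ σ(H). -/
/-!
Put `T = H - λ` and `R = (H + 1)⁻¹`. Since `R T = 1 - (λ + 1) R` and `R`, `T` commute,
`⟨ψ, Tψ⟩ - (λ + 1)⟨Rψ, Tψ⟩ = ⟨ψ, T R T ψ⟩ = ‖R^{1/2} T ψ‖²`. So the hypotheses make the unit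
vectors `ψₙ` approximate null vectors of `R^{1/2} T`, which therefore is not invertible; as
`R^{1/2}` is invertible, neither is `T`.
-/

open Filter Topology

theorem ContinuousLinearMap.not_isUnit_of_tendsto_apply_zero {𝕜 E ι : Type*}
    [NontriviallyNormedField 𝕜] [NormedAddCommGroup E] [NormedSpace 𝕜 E]
    {l : Filter ι} [l.NeBot] {A : E →L[𝕜] E} {ψ : ι → E} (hψ : ∀ i, ‖ψ i‖ = 1)
    (hA : Tendsto (fun i => A (ψ i)) l (𝓝 0)) : ¬ IsUnit A := by
  rintro ⟨u, rfl⟩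
  have hinv (x : E) : (↑u⁻¹ : E →L[𝕜] E) ((u : E →L[𝕜] E) x) = x := by
    change (↑u⁻¹ * ↑u : E →L[𝕜] E) x = x
    rw [u.inv_mul]
    rfl
  have hψ0 : Tendsto ψ l (𝓝 0) := by
    simpa [Function.comp_def, hinv] using ((↑u⁻¹ : E →L[𝕜] E).continuous.tendsto 0).comp hA
  simpa [hψ] using hψ0.norm

theorem ContinuousLinearMap.inner_apply_star_mul_self {𝕜 E : Type*} [RCLike 𝕜]
    [NormedAddCommGroup E] [InnerProductSpace 𝕜 E] [CompleteSpace E]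
    (A : E →L[𝕜] E) (x : E) : inner 𝕜 x ((star A * A) x) = (‖A x‖ ^ 2 : 𝕜) := by
  change inner 𝕜 x (star A (A x)) = _
  rw [star_eq_adjoint, adjoint_inner_right, inner_self_eq_norm_sq_to_K]

section CStarAlgebra

variable {A : Type*} [CStarAlgebra A] [PartialOrder A] [StarOrderedRing A] {a : A}

theorem isUnit_add_one_of_nonneg (ha : 0 ≤ a) : IsUnit (a + 1) :=
  (IsStrictlyPositive.nonneg_add ha isStrictlyPositive_one).isUnit

theorem cfc_inv_add_one_eq_ringInverse (ha : 0 ≤ a) :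
    cfc (fun x : ℝ => (x + 1)⁻¹) a = Ring.inverse (a + 1) := by
  have hspec : ∀ x ∈ spectrum ℝ a, x + 1 ≠ 0 := fun x hx =>
    (add_pos_of_nonneg_of_pos (spectrum_nonneg_of_nonneg ha hx) one_pos).ne'
  rw [cfc_inv (· + 1) a hspec, cfc_add_const (1 : ℝ) (fun x => x) a, cfc_id' ℝ a, map_one]

theorem cfc_inv_add_one_nonneg (ha : 0 ≤ a) : 0 ≤ cfc (fun x : ℝ => (x + 1)⁻¹) a :=
  cfc_nonneg fun x hx => inv_nonneg.mpr (by linarith [spectrum_nonneg_of_nonneg ha hx])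

theorem isUnit_sqrt_cfc_inv_add_one (ha : 0 ≤ a) :
    IsUnit (CFC.sqrt (cfc (fun x : ℝ => (x + 1)⁻¹) a)) := by
  rw [CFC.isUnit_sqrt_iff _ (cfc_inv_add_one_nonneg ha), cfc_inv_add_one_eq_ringInverse ha]
  exact (isUnit_add_one_of_nonneg ha).ringInverse

theorem star_mul_self_sqrt_cfc_inv_add_one_mul (ha : 0 ≤ a) (r : ℝ) :
    star (CFC.sqrt (cfc (fun x : ℝ => (x + 1)⁻¹) a) * (a - (r : ℂ) • 1)) *
      (CFC.sqrt (cfc (fun x : ℝ => (x + 1)⁻¹) a) * (a - (r : ℂ) • 1)) =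
    (a - (r : ℂ) • 1) - ((r : ℂ) + 1) • (cfc (fun x : ℝ => (x + 1)⁻¹) a * (a - (r : ℂ) • 1)) := by
  have hT : IsSelfAdjoint (a - (r : ℂ) • 1) :=
    ha.isSelfAdjoint.sub (IsSelfAdjoint.smul (Complex.conj_ofReal r) (IsSelfAdjoint.one A))
  rw [star_mul, hT.star_eq, (CFC.sqrt_nonneg _).isSelfAdjoint.star_eq, mul_assoc,
    ← mul_assoc (CFC.sqrt _), CFC.sqrt_mul_sqrt_self _ (cfc_inv_add_one_nonneg ha),
    cfc_inv_add_one_eq_ringInverse ha]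
  have hu := isUnit_add_one_of_nonneg ha
  have hshift : a - (r : ℂ) • 1 = (a + 1) - ((r : ℂ) + 1) • 1 := by
    rw [add_smul, one_smul]; abel
  rw [hshift]
  simp only [mul_sub, sub_mul, mul_smul_comm, smul_mul_assoc, Ring.inverse_mul_cancel _ hu,
    Ring.mul_inverse_cancel _ hu, mul_one, one_mul]

end CStarAlgebra

theorem inner_sub_inner_cfc_inv_add_one_eq_norm_sq {ℋ : Type*} [NormedAddCommGroup ℋ]
    [InnerProductSpace ℂ ℋ] [CompleteSpace ℋ] {H : ℋ →L[ℂ] ℋ} (hH : 0 ≤ H) (r : ℝ) (x : ℋ) :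
    inner ℂ x ((H - (r : ℂ) • 1) x) -
        ((r : ℂ) + 1) * inner ℂ (cfc (fun x : ℝ => (x + 1)⁻¹) H x) ((H - (r : ℂ) • 1) x) =
      (‖(CFC.sqrt (cfc (fun x : ℝ => (x + 1)⁻¹) H) * (H - (r : ℂ) • 1)) x‖ ^ 2 : ℂ) := by
  calc _ = inner ℂ x ((star (CFC.sqrt (cfc (fun x : ℝ => (x + 1)⁻¹) H) * (H - (r : ℂ) • 1)) *
          (CFC.sqrt (cfc (fun x : ℝ => (x + 1)⁻¹) H) * (H - (r : ℂ) • 1))) x) := by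
        have hR := (cfc_inv_add_one_nonneg hH).isSelfAdjoint.isSymmetric x ((H - (r : ℂ) • 1) x)
        simp only [ContinuousLinearMap.coe_coe] at hR
        rw [hR, ← inner_smul_right, ← inner_sub_right, star_mul_self_sqrt_cfc_inv_add_one_mul hH]
        rfl
    _ = _ := ContinuousLinearMap.inner_apply_star_mul_self _ x

theorem weyl_resolvent_criterion_general
    {ℋ : Type*} [NormedAddCommGroup ℋ] [InnerProductSpace ℂ ℋ] [CompleteSpace ℋ]
    (H : ℋ →L[ℂ] ℋ) (hHpos : H.IsPositive)
    (lam : ℝ)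
    (ψ : ℕ → ℋ) (hψ : ∀ n, ‖ψ n‖ = 1)
    (h1 : Tendsto (fun n =>
        (inner ℂ ((cfc (fun x : ℝ => (x + 1)⁻¹) H) (ψ n))
          ((H - (lam : ℂ) • 1) (ψ n)) : ℂ)) atTop (nhds 0))
    (h2 : Tendsto (fun n => (inner ℂ (ψ n) ((H - (lam : ℂ) • 1) (ψ n)) : ℂ))
        atTop (nhds 0)) :
    (lam : ℂ) ∈ spectrum ℂ H := by
  have hH : 0 ≤ H := (ContinuousLinearMap.nonneg_iff_isPositive H).mpr hHpos
  set A := CFC.sqrt (cfc (fun x : ℝ => (x + 1)⁻¹) H) * (H - (lam : ℂ) • 1)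
  have hnorm_sq : Tendsto (fun n => (‖A (ψ n)‖ ^ 2 : ℂ)) atTop (𝓝 0) := by
    have hlim := h2.sub (h1.const_mul ((lam : ℂ) + 1))
    rw [mul_zero, sub_zero] at hlim
    simpa only [inner_sub_inner_cfc_inv_add_one_eq_norm_sq hH] using hlim
  have hA : Tendsto (fun n => A (ψ n)) atTop (𝓝 0) := by
    rw [tendsto_zero_iff_norm_tendsto_zero] at hnorm_sq ⊢
    simpa using hnorm_sq.sqrt
  rw [spectrum.mem_iff, Algebra.algebraMap_eq_smul_one, IsUnit.sub_iff]
  exact fun hunit => ContinuousLinearMap.not_isUnit_of_tendsto_apply_zero hψ hA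
    ((isUnit_sqrt_cfc_inv_add_one hH).mul hunit)

/-- Weyl criterion with the resolvent `(H+1)⁻¹` (the case `f(x) = (x+1)⁻¹` of
the generalized criterion): if there is a sequence of unit vectors `ψₙ` with
`⟨(H+1)⁻¹ψₙ, (H−λ)ψₙ⟩ → 0` and `⟨ψₙ, (H−λ)ψₙ⟩ → 0`, then `λ ∈ σ(H)`. -/
theorem weyl_resolvent_criterion
    {ℋ : Type*} [NormedAddCommGroup ℋ] [InnerProductSpace ℂ ℋ] [CompleteSpace ℋ]
    (H : ℋ →L[ℂ] ℋ) (hH : IsSelfAdjoint H) (hHpos : H.IsPositive)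
    (lam : ℝ) (hlam_nonneg : 0 ≤ lam)
    (ψ : ℕ → ℋ) (hψ : ∀ n, ‖ψ n‖ = 1)
    (h1 : Tendsto (fun n =>
        (inner ℂ ((cfc (fun x : ℝ => (x + 1)⁻¹) H) (ψ n))
          ((H - (lam : ℂ) • 1) (ψ n)) : ℂ)) atTop (nhds 0))
    (h2 : Tendsto (fun n => (inner ℂ (ψ n) ((H - (lam : ℂ) • 1) (ψ n)) : ℂ))
        atTop (nhds 0)) :
    (lam : ℂ) ∈ spectrum ℂ H :=
  weyl_resolvent_criterion_general H hHpos lam ψ hψ h1 h2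
end

section
/- Let h : [0,∞) → (0,∞) be a nonincreasing differentiable function such that for all c ∈ (0,1) it is false that h(x + 2kR) ≤ c^k h(x) for all large x and all k. Then for every ε > 0 and every sufficiently large R there exists a sequence x_k → ∞ such that ε h(x_k − R) − h'(x_k − R) ≤ 2ε h(x_k). -/
open Filter

/-- If `h : [0,∞) → (0,∞)` is a nonincreasing differentiable function that
does not decay exponentially (for every `c ∈ (0,1)` and `R > 0` it is false
that `h(x + 2kR) ≤ c^k h(x)` for all large `x` and all `k`), then for every
`ε > 0` and every sufficiently large `R` there is a sequence `x_k → ∞` such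
that `ε h(x_k − R) − h'(x_k − R) ≤ 2ε h(x_k)`. -/
theorem nonexponential_decay_sequence
    (h : ℝ → ℝ) (hpos : ∀ x, 0 < h x) (hanti : Antitone h)
    (hdiff : Differentiable ℝ h)
    (hnodecay : ∀ c : ℝ, 0 < c → c < 1 → ∀ R : ℝ, 0 < R →
      ¬ ∃ x₁ : ℝ, ∀ x : ℝ, x₁ ≤ x → ∀ k : ℕ,
        h (x + 2 * k * R) ≤ c ^ k * h x) :
    ∀ ε : ℝ, 0 < ε → ∃ R₀ : ℝ, ∀ R : ℝ, R₀ ≤ R →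
      ∃ x : ℕ → ℝ, Tendsto x atTop atTop ∧
        ∀ k, ε * h (x k - R) - deriv h (x k - R) ≤ 2 * ε * h (x k) := by
  intro ε hε
  refine ⟨max 1 (Real.log 8 / ε), fun R hR => ?_⟩
  have hR1 : (1:ℝ) ≤ R := le_trans (le_max_left _ _) hR
  have hRpos : (0:ℝ) < R := lt_of_lt_of_le one_pos hR1
  have hexp : Real.exp (-(ε*R)) ≤ 1/8 := by
    have h8 : Real.log 8 ≤ ε * R := by
      have h' := le_trans (le_max_right _ _) hR
      rw [div_le_iff₀ hε] at h'
      linarith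
    calc Real.exp (-(ε*R)) = (Real.exp (ε*R))⁻¹ := by rw [Real.exp_neg]
    _ ≤ (Real.exp (Real.log 8))⁻¹ := by
        exact inv_anti₀ (Real.exp_pos _) (Real.exp_le_exp.mpr h8)
    _ = 1/8 := by rw [Real.exp_log (by norm_num : (0:ℝ) < 8)]; norm_num
  by_cases H : ∃ x₁ : ℝ, ∀ x, x₁ ≤ x → 2*ε*h x < ε * h (x - R) - deriv h (x - R)
  · exfalso
    obtain ⟨x₁, hx₁⟩ := H
    -- key step
    have key : ∀ a : ℝ, x₁ ≤ a → h (a + R) ≤ (4/7) * h (a - R) := by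
      intro a ha
      set F : ℝ → ℝ := fun x => Real.exp (-(ε*x)) * (h (x - R) - 2 * h (a + R)) with hF
      have hFder : ∀ x : ℝ, HasDerivAt F
          (Real.exp (-(ε*x)) * (deriv h (x - R))
            + (Real.exp (-(ε*x)) * (-ε)) * (h (x - R) - 2 * h (a + R))) x := by
        intro x
        have h1 : HasDerivAt (fun x : ℝ => -(ε*x)) (-ε) x := by
          simpa using ((hasDerivAt_id x).const_mul (-ε))
        have h2 : HasDerivAt (fun x : ℝ => Real.exp (-(ε*x)))
            (Real.exp (-(ε*x)) * (-ε)) x := h1.exp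
        have h3 : HasDerivAt (fun x : ℝ => h (x - R)) (deriv h (x - R)) x := by
          have := ((hdiff (x - R)).hasDerivAt).comp x ((hasDerivAt_id x).sub_const R)
          exact this.congr_deriv (mul_one _)
        have h4 : HasDerivAt (fun x : ℝ => h (x - R) - 2 * h (a + R))
            (deriv h (x - R)) x := h3.sub_const _
        have := h2.mul h4
        exact this.congr_deriv (by ring)
      have hFanti : AntitoneOn F (Set.Icc a (a + R)) := by
        apply antitoneOn_of_deriv_nonpos (convex_Icc a (a + R))
        · exact Continuous.continuousOn (by
            have : ∀ x, DifferentiableAt ℝ F x := fun x => (hFder x).differentiableAt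
            exact (Differentiable.continuous this))
        · intro x hx
          exact (hFder x).differentiableAt.differentiableWithinAt
        · intro x hx
          rw [interior_Icc] at hx
          rw [(hFder x).deriv]
          have hxge : x₁ ≤ x := le_trans ha (le_of_lt hx.1)
          have hlt := hx₁ x hxge
          have hle : h (a + R) ≤ h x := hanti (le_of_lt hx.2)
          have Epos : 0 < Real.exp (-(ε*x)) := Real.exp_pos _
          nlinarith [mul_lt_mul_of_pos_left hlt Epos,
            mul_le_mul_of_nonneg_left hle (le_of_lt (mul_pos hε Epos))]
      have hFle : F (a + R) ≤ F a :=
        hFanti (Set.left_mem_Icc.mpr (by linarith)) (Set.right_mem_Icc.mpr (by linarith))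
          (by linarith)
      -- unfold
      have hAB : Real.exp (-(ε*(a+R))) = Real.exp (-(ε*a)) * Real.exp (-(ε*R)) := by
        rw [← Real.exp_add]; ring_nf
      have hFle' : Real.exp (-(ε*a)) * (Real.exp (-(ε*R)) * (h a - 2 * h (a + R)))
          ≤ Real.exp (-(ε*a)) * (h (a - R) - 2 * h (a + R)) := by
        have := hFle
        simp only [hF] at this
        rw [hAB] at this
        have heq : a + R - R = a := by ring
        rw [heq] at this
        linarith [this, mul_assoc (Real.exp (-(ε*a))) (Real.exp (-(ε*R))) (h a - 2 * h (a + R))]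
      have Apos : 0 < Real.exp (-(ε*a)) := Real.exp_pos _
      have hmain : Real.exp (-(ε*R)) * (h a - 2 * h (a + R)) ≤ h (a - R) - 2 * h (a + R) :=
        le_of_mul_le_mul_left hFle' Apos
      have hqpos : 0 < Real.exp (-(ε*R)) := Real.exp_pos _
      nlinarith [hpos a, hpos (a + R), mul_pos hqpos (hpos a),
        mul_le_mul_of_nonneg_right hexp (le_of_lt (hpos (a + R)))]
    -- iterate
    have claim : ∀ y : ℝ, x₁ - R ≤ y → ∀ k : ℕ, h (y + 2 * k * R) ≤ (4/7:ℝ) ^ k * h y := by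
      intro y hy k
      induction k with
      | zero => simp
      | succ n ih =>
        have ha : x₁ ≤ y + 2 * n * R + R := by
          have : (0:ℝ) ≤ 2 * n * R := by positivity
          linarith
        have hk := key (y + 2 * n * R + R) ha
        have heq1 : y + 2 * n * R + R + R = y + 2 * (n+1) * R := by push_cast; ring
        have heq2 : y + 2 * n * R + R - R = y + 2 * n * R := by ring
        rw [heq1, heq2] at hk
        calc h (y + 2 * (n+1 : ℕ) * R) ≤ 4/7 * h (y + 2 * n * R) := by
              push_cast; push_cast at hk; linarith
        _ ≤ 4/7 * ((4/7:ℝ)^n * h y) := by linarith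
        _ = (4/7:ℝ)^(n+1) * h y := by ring
    exact hnodecay (4/7) (by norm_num) (by norm_num) R hRpos ⟨x₁ - R, claim⟩
  · push_neg at H
    choose x hx1 hx2 using fun k : ℕ => H (k : ℝ)
    exact ⟨x, tendsto_atTop_mono hx1 tendsto_natCast_atTop_atTop, hx2⟩
end

section
/- Let φ : ℝ → ℝ be differentiable on (a, ∞) and satisfy the Riccati inequality 0 ≥ (1/(n−1))φ(r)² + φ'(r) − (n−1)δ(r), where δ is continuous, positive, and δ(r) → 0 as r → ∞. Then limsup_{r→∞} φ(r) ≤ 0. -/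
open Filter Set

/-- Riccati comparison: if `φ` is differentiable on `(a, ∞)` and satisfies
`0 ≥ φ(r)²/(n−1) + φ'(r) − (n−1)δ(r)` there, where `n ≥ 2` and `δ` is
continuous, positive, and `δ(r) → 0` as `r → ∞`, then `limsup_{r→∞} φ(r) ≤ 0`. -/
theorem riccati_limsup_nonpos
    (n : ℕ) (hn : 2 ≤ n) (a : ℝ)
    (φ δ : ℝ → ℝ)
    (hφ : ∀ r, a < r → DifferentiableAt ℝ φ r)
    (hδ_cont : Continuous δ) (hδ_pos : ∀ r, 0 < δ r)
    (hδ_lim : Tendsto δ atTop (nhds 0))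
    (hriccati : ∀ r, a < r →
      (1 / ((n : ℝ) - 1)) * (φ r) ^ 2 + deriv φ r - ((n : ℝ) - 1) * δ r ≤ 0) :
    limsup φ atTop ≤ 0 := by
  have hN : (1:ℝ) ≤ (n:ℝ) - 1 := by
    have h2 : (2:ℝ) ≤ (n:ℝ) := by exact_mod_cast hn
    linarith
  have hN0 : (0:ℝ) < (n:ℝ) - 1 := by linarith
  set N : ℝ := (n:ℝ) - 1 with hNdef
  -- Main step: for every ε > 0, eventually φ r ≤ ε.
  have key : ∀ ε : ℝ, 0 < ε → ∀ᶠ r in atTop, φ r ≤ ε := by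
    intro ε hε
    set c : ℝ := ε ^ 2 / (2 * N) with hc
    have hc0 : 0 < c := by positivity
    have h2c : ε ^ 2 / N = 2 * c := by
      rw [hc]; field_simp
    obtain ⟨R₀, hR₀⟩ := eventually_atTop.mp
      (hδ_lim.eventually_lt_const (show (0:ℝ) < c / N by positivity))
    set R : ℝ := max R₀ (a + 1) with hR
    have hRa : a < R := lt_of_lt_of_le (by linarith) (le_max_right _ _)
    -- derivative bound at points where φ ≥ ε
    have hderiv : ∀ r, R ≤ r → ε ≤ φ r → deriv φ r ≤ -c := by
      intro r hr hφr
      have har : a < r := lt_of_lt_of_le hRa hr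
      have h1 := hriccati r har
      have h2 : δ r < c / N := hR₀ r (le_trans (le_max_left _ _) hr)
      have h3 : ε ^ 2 ≤ φ r ^ 2 := by nlinarith
      have h4 : (1 / N) * ε ^ 2 ≤ (1 / N) * φ r ^ 2 :=
        mul_le_mul_of_nonneg_left h3 (by positivity)
      have h5 : N * δ r < N * (c / N) := by
        exact mul_lt_mul_of_pos_left h2 hN0
      have h6 : N * (c / N) = c := by field_simp
      have h7 : (1 / N) * ε ^ 2 = 2 * c := by
        rw [one_div, inv_mul_eq_div, h2c]
      linarith
    have hcont : ContinuousOn φ (Ici R) := fun x hx =>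
      (hφ x (lt_of_lt_of_le hRa hx)).continuousAt.continuousWithinAt
    -- Step 1: φ dips below ε somewhere beyond R
    have step1 : ∃ r₁, R ≤ r₁ ∧ φ r₁ < ε := by
      by_contra hcon
      push_neg at hcon
      have hgC : ContinuousOn (fun x => φ x + c * x) (Ici R) :=
        hcont.add ((continuous_const.mul continuous_id).continuousOn)
      have hgd : ∀ x ∈ interior (Ici R),
          HasDerivAt (fun x => φ x + c * x) (deriv φ x + c) x := by
        intro x hx
        rw [interior_Ici] at hx
        have h1 : HasDerivAt φ (deriv φ x) x :=
          (hφ x (lt_trans hRa hx)).hasDerivAt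
        have h2 : HasDerivAt (fun y => c * y) c x := by
          simpa using (hasDerivAt_id x).const_mul c
        exact h1.add h2
      have hanti : AntitoneOn (fun x => φ x + c * x) (Ici R) := by
        apply antitoneOn_of_deriv_nonpos (convex_Ici R) hgC
        · intro x hx
          exact (hgd x hx).differentiableAt.differentiableWithinAt
        · intro x hx
          have hd := (hgd x hx).deriv
          rw [hd]
          rw [interior_Ici] at hx
          have := hderiv x hx.le (hcon x hx.le)
          linarith
      have hφR : ε ≤ φ R := hcon R le_rfl
      have hd0 : 0 ≤ (φ R - ε) / c := div_nonneg (by linarith) hc0.le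
      have hxR : R ≤ R + (φ R - ε) / c + 1 := by linarith
      have hg := hanti (mem_Ici.mpr (le_refl R)) (mem_Ici.mpr hxR) hxR
      have hφx : ε ≤ φ (R + (φ R - ε) / c + 1) := hcon _ hxR
      have hcd : c * ((φ R - ε) / c) = φ R - ε := by field_simp
      simp only at hg
      nlinarith [hg, hφx, hcd, hc0]
    obtain ⟨r₁, hr₁R, hr₁⟩ := step1
    -- Step 2: φ stays ≤ ε beyond r₁
    rw [eventually_atTop]
    refine ⟨r₁, fun r₂ hr₂ => ?_⟩
    by_contra hcon
    push_neg at hcon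
    set S : Set ℝ := Icc r₁ r₂ ∩ φ ⁻¹' (Ici ε) with hS
    have hcontI : ContinuousOn φ (Icc r₁ r₂) :=
      hcont.mono (fun t ht => le_trans hr₁R ht.1)
    have hSclosed : IsClosed S :=
      hcontI.preimage_isClosed_of_isClosed isClosed_Icc isClosed_Ici
    have hr₂S : r₂ ∈ S := ⟨⟨hr₂, le_refl r₂⟩, le_of_lt hcon⟩
    have hSbdd : BddBelow S := ⟨r₁, fun t ht => ht.1.1⟩
    set s : ℝ := sInf S with hsdef
    have hsS : s ∈ S := hSclosed.csInf_mem ⟨r₂, hr₂S⟩ hSbdd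
    have hr₁s : r₁ < s := by
      rcases lt_or_eq_of_le hsS.1.1 with h | h
      · exact h
      · exact absurd hsS.2 (by rw [← h]; simpa using not_le.mpr hr₁)
    have hlt : ∀ t, r₁ ≤ t → t < s → φ t < ε := by
      intro t ht hts
      by_contra h
      push_neg at h
      have htS : t ∈ S := ⟨⟨ht, le_trans hts.le hsS.1.2⟩, h⟩
      exact absurd (csInf_le hSbdd htS) (not_le.mpr hts)
    have hRs : R ≤ s := le_trans hr₁R hsS.1.1
    have has : a < s := lt_of_lt_of_le hRa hRs
    have hd : deriv φ s ≤ -c := hderiv s hRs hsS.2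
    have hD : HasDerivAt φ (deriv φ s) s := (hφ s has).hasDerivAt
    have hslope := hasDerivAt_iff_tendsto_slope.mp hD
    have hneg : ∀ᶠ t in nhdsWithin s (Iio s), slope φ s t < 0 :=
      Filter.Eventually.filter_mono
        (nhdsWithin_mono s (fun t ht => ne_of_lt ht))
        (hslope.eventually_lt_const (by linarith : deriv φ s < 0))
    have hmem : ∀ᶠ t in nhdsWithin s (Iio s), t ∈ Ioo r₁ s :=
      eventually_of_mem (Ioo_mem_nhdsLT_of_mem ⟨hr₁s, le_refl s⟩) (fun _ h => h)
    obtain ⟨t, hts, htI⟩ := (hneg.and hmem).exists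
    have hslopet : (φ t - φ s) / (t - s) < 0 := by
      rwa [slope_def_field] at hts
    have hts0 : t - s < 0 := by linarith [htI.2]
    have hnum : 0 < φ t - φ s := by
      rcases div_neg_iff.mp hslopet with ⟨h1, _⟩ | ⟨_, h2⟩
      · exact h1
      · linarith
    have := hlt t htI.1.le htI.2
    linarith [show ε ≤ φ s from hsS.2]
  -- Conclude: limsup ≤ 0
  rw [limsup_eq]
  by_cases hbdd : BddBelow {b | ∀ᶠ r in atTop, φ r ≤ b}
  · refine le_of_forall_pos_le_add fun ε hε => ?_
    have : sInf {b | ∀ᶠ r in atTop, φ r ≤ b} ≤ ε := csInf_le hbdd (key ε hε)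
    linarith
  · rw [Real.sInf_of_not_bddBelow hbdd]
end
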